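/- arXiv:1506.07124 — 6 statements merged into one kernel-verified Lean document; each statement's English description precedes it below -/
import Mathlib

section
/- Let P be an n×ℓ joint probability matrix (nonnegative entries summing to 1) whose first column p₁ equals λ·p₂ for some λ ≥ 0, where p₂ is the second column. Then P is conditionally equivalent to the n×(ℓ−1) matrix P' = [(1+λ)p₂, p₃, ..., p_ℓ]; that is, each can be obtained from the other by a transformation of the form Q = Σ_j D⁽ʲ⁾ P R⁽ʲ⁾ with each D⁽ʲ⁾ doubly stochastic n×n and R⁽ʲ⁾ entrywise nonnegative with Σ_j R⁽ʲ⁾ row-stochastic. -/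
open Matrix Finset

/-- Row-stochastic matrix: nonnegative entries, each row sums to 1. -/
def RowStoch {ℓ m : ℕ} (T : Matrix (Fin ℓ) (Fin m) ℝ) : Prop :=
  (∀ y w, 0 ≤ T y w) ∧ ∀ y, ∑ w, T y w = 1

/-- Doubly stochastic matrix. -/
def DStoch {n : ℕ} (D : Matrix (Fin n) (Fin n) ℝ) : Prop :=
  (∀ i j, 0 ≤ D i j) ∧ (∀ i, ∑ j, D i j = 1) ∧ (∀ j, ∑ i, D i j = 1)

/-- Conditional majorization `P ≻_c Q` via classical-conditioned random relabelings:
`Q = ∑ j, D j * P * R j` with each `D j` doubly stochastic, each `R j` entrywise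
nonnegative, and `∑ j, R j` row-stochastic. -/
def CondMaj {n ℓ m : ℕ} (P : Matrix (Fin n) (Fin ℓ) ℝ)
    (Q : Matrix (Fin n) (Fin m) ℝ) : Prop :=
  ∃ (J : ℕ) (D : Fin J → Matrix (Fin n) (Fin n) ℝ)
    (R : Fin J → Matrix (Fin ℓ) (Fin m) ℝ),
    (∀ j, DStoch (D j)) ∧ (∀ j y w, 0 ≤ R j y w) ∧
    RowStoch (∑ j, R j) ∧ Q = ∑ j, D j * P * R j

/-- Joint probability matrix: nonnegative entries summing to one. -/
def JointProb {n ℓ : ℕ} (P : Matrix (Fin n) (Fin ℓ) ℝ) : Prop :=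
  (∀ x y, 0 ≤ P x y) ∧ ∑ x, ∑ y, P x y = 1

/-- Column sum (marginal). -/
noncomputable def ColSum {n m : ℕ} (Q : Matrix (Fin n) (Fin m) ℝ) (w : Fin m) : ℝ :=
  ∑ x, Q x w

/-!
Both directions need only one relabeling, with `D = 1`. Merging the first two columns is the
deterministic relabeling `0, 1 ↦ 0`, which turns `P` into `P'` because `p₁ + p₂ = (1 + λ) p₂`.
Conversely, since `p₁ = λ p₂`, the merged column `(1 + λ) p₂` is split back into `p₁` and `p₂` by
sending its mass to labels `0` and `1` with probabilities `λ / (1 + λ)` and `1 / (1 + λ)`.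
-/

theorem dStoch_one (n : ℕ) : DStoch (1 : Matrix (Fin n) (Fin n) ℝ) := by
  refine ⟨fun i j => ?_, fun i => ?_, fun j => ?_⟩ <;> simp [Matrix.one_apply, apply_ite]

theorem condMaj_of_mul_eq {n ℓ m : ℕ} {P : Matrix (Fin n) (Fin ℓ) ℝ}
    {Q : Matrix (Fin n) (Fin m) ℝ} {R : Matrix (Fin ℓ) (Fin m) ℝ} (hR : RowStoch R)
    (hQ : P * R = Q) : CondMaj P Q :=
  ⟨1, fun _ => 1, fun _ => R, fun _ => dStoch_one n, fun _ => hR.1, by simpa using hR,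
    by simp [hQ]⟩

section Relabel

variable {ℓ m : ℕ}

def mergeMatrix (f : Fin ℓ → Fin m) : Matrix (Fin ℓ) (Fin m) ℝ :=
  of fun y w => if f y = w then 1 else 0

def splitMatrix (f : Fin ℓ → Fin m) (c : Fin ℓ → ℝ) : Matrix (Fin m) (Fin ℓ) ℝ :=
  of fun w y => if f y = w then c y else 0

theorem rowStoch_mergeMatrix (f : Fin ℓ → Fin m) : RowStoch (mergeMatrix f) :=
  ⟨fun y w => by simp only [mergeMatrix, of_apply]; positivity, fun y => by simp [mergeMatrix]⟩

theorem mul_mergeMatrix_apply {n : ℕ} (P : Matrix (Fin n) (Fin ℓ) ℝ) (f : Fin ℓ → Fin m)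
    (x : Fin n) (w : Fin m) : (P * mergeMatrix f) x w = ∑ y, if f y = w then P x y else 0 := by
  simp [mul_apply, mergeMatrix]

theorem rowStoch_splitMatrix {f : Fin ℓ → Fin m} {c : Fin ℓ → ℝ} (hc : ∀ y, 0 ≤ c y)
    (hfibre : ∀ w, ∑ y, (if f y = w then c y else 0) = 1) : RowStoch (splitMatrix f c) :=
  ⟨fun w y => by simp only [splitMatrix, of_apply]; have := hc y; positivity, hfibre⟩

theorem mul_splitMatrix_apply {n : ℕ} (Q : Matrix (Fin n) (Fin m) ℝ) (f : Fin ℓ → Fin m)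
    (c : Fin ℓ → ℝ) (x : Fin n) (y : Fin ℓ) : (Q * splitMatrix f c) x y = Q x (f y) * c y := by
  simp [mul_apply, splitMatrix]

end Relabel

section MergeFirstTwo

variable {n ℓ : ℕ}

def mergeFirstTwo (ℓ : ℕ) : Fin (ℓ + 2) → Fin (ℓ + 1) :=
  Fin.cons 0 id

/-- When column `0` is `lam` times column `1`, splitting the merged column in the ratio
`lam : 1` recovers both. -/
noncomputable def splitWeights (ℓ : ℕ) (lam : ℝ) : Fin (ℓ + 2) → ℝ :=
  Fin.cons (lam / (1 + lam)) (Fin.cons (1 / (1 + lam)) 1)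

theorem rowStoch_splitMatrix_splitWeights {lam : ℝ} (hlam : 0 ≤ lam) :
    RowStoch (splitMatrix (mergeFirstTwo ℓ) (splitWeights ℓ lam)) := by
  refine rowStoch_splitMatrix (fun y => ?_) (fun w => ?_)
  · refine Fin.cases ?_ (Fin.cases ?_ fun k => ?_) y <;> simp [splitWeights] <;> positivity
  · rw [Fin.sum_univ_succ, Fin.sum_univ_succ]
    cases w using Fin.cases with
    | zero =>
      have : 1 + lam ≠ 0 := by positivity
      simp only [mergeFirstTwo, splitWeights, Fin.cons_zero, Fin.succ_zero_eq_one, Fin.cons_one,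
        id_eq, ↓reduceIte, Fin.cons_succ, Fin.succ_ne_zero, sum_const_zero, add_zero]
      field_simp
      ring
    | succ k => simp [mergeFirstTwo, splitWeights, Ne.symm (Fin.succ_ne_zero _)]

theorem mul_mergeMatrix_mergeFirstTwo (P : Matrix (Fin n) (Fin (ℓ + 2)) ℝ) {lam : ℝ}
    (hcol : ∀ x, P x 0 = lam * P x 1) :
    P * mergeMatrix (mergeFirstTwo ℓ) =
      of fun x w => if w = 0 then (1 + lam) * P x 1 else P x w.succ := by
  ext x w
  rw [mul_mergeMatrix_apply, Fin.sum_univ_succ, Fin.sum_univ_succ]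
  cases w using Fin.cases with
  | zero => simp [mergeFirstTwo, hcol, add_mul, add_comm]
  | succ k => simp [mergeFirstTwo, Ne.symm (Fin.succ_ne_zero _)]

theorem mul_splitMatrix_mergeFirstTwo (P : Matrix (Fin n) (Fin (ℓ + 2)) ℝ) {lam : ℝ}
    (hlam : 1 + lam ≠ 0) (hcol : ∀ x, P x 0 = lam * P x 1) :
    (of fun x (w : Fin (ℓ + 1)) => if w = 0 then (1 + lam) * P x 1 else P x w.succ) *
      splitMatrix (mergeFirstTwo ℓ) (splitWeights ℓ lam) = P := by
  ext x y
  rw [mul_splitMatrix_apply]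
  cases y using Fin.cases with
  | zero =>
    simp only [mergeFirstTwo, splitWeights, Fin.cons_zero, of_apply, ↓reduceIte, hcol]
    field_simp
  | succ y =>
    cases y using Fin.cases with
    | zero =>
      simp only [mergeFirstTwo, splitWeights, Fin.succ_zero_eq_one, Fin.cons_one, id_eq, of_apply,
        ↓reduceIte, Fin.cons_zero]
      field_simp
    | succ y => simp [mergeFirstTwo, splitWeights]

end MergeFirstTwo

theorem stmt0_general {n ℓ : ℕ} (P : Matrix (Fin n) (Fin (ℓ + 2)) ℝ)
    (P' : Matrix (Fin n) (Fin (ℓ + 1)) ℝ) (lam : ℝ)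
    (hlam : 0 ≤ lam)
    (hcol : ∀ x, P x 0 = lam * P x 1)
    (hP' : P' = Matrix.of fun x (w : Fin (ℓ + 1)) =>
      if w = 0 then (1 + lam) * P x 1 else P x w.succ) :
    CondMaj P P' ∧ CondMaj P' P := by
  subst hP'
  exact ⟨condMaj_of_mul_eq (rowStoch_mergeMatrix _) (mul_mergeMatrix_mergeFirstTwo P hcol),
    condMaj_of_mul_eq (rowStoch_splitMatrix_splitWeights hlam)
      (mul_splitMatrix_mergeFirstTwo P (by positivity) hcol)⟩

theorem stmt0 {n ℓ : ℕ} (P : Matrix (Fin n) (Fin (ℓ + 2)) ℝ)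
    (P' : Matrix (Fin n) (Fin (ℓ + 1)) ℝ) (lam : ℝ)
    (hP : JointProb P) (hlam : 0 ≤ lam)
    (hcol : ∀ x, P x 0 = lam * P x 1)
    (hP' : P' = Matrix.of fun x (w : Fin (ℓ + 1)) =>
      if w = 0 then (1 + lam) * P x 1 else P x w.succ) :
    CondMaj P P' ∧ CondMaj P' P :=
  stmt0_general P P' lam hlam hcol hP'
end

section
/- For an n×ℓ nonnegative matrix P and n×m nonnegative matrix Q, Q ≺_c P (i.e., Q = Σ_j D⁽ʲ⁾ P R⁽ʲ⁾ for doubly stochastic D⁽ʲ⁾ and nonnegative R⁽ʲ⁾ with Σ_j R⁽ʲ⁾ row-stochastic) if and only if there exist m doubly stochastic n×n matrices D⁽ʷ⁾ (w = 1,...,m) and an ℓ×m row-stochastic matrix T = [t_{yw}] such that each column of Q satisfies q_w = Σ_{y=1}^ℓ t_{yw} D^{(y,w)} p_y, where p_y are the columns of P. -/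
open Matrix Finset

/-!
Conditional majorization mixes relabelings `D j` of `P` with weights `R j y w`. For a fixed pair
`(y, w)` the total weight `T y w = ∑ j, R j y w` factors out, and the normalized mixture
`∑ j, (R j y w / T y w) • D j` is again doubly stochastic because doubly stochastic matrices
form a convex set. Conversely, a columnwise decomposition is a conditional majorization indexed
by the pairs `(y, w)`, with `R (y, w)` the matrix whose only nonzero entry is `T y w` at `(y, w)`.
-/

lemma dStoch_iff_mem_doublyStochastic {n : ℕ} {D : Matrix (Fin n) (Fin n) ℝ} :
    DStoch D ↔ D ∈ doublyStochastic ℝ (Fin n) :=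
  mem_doublyStochastic_iff_sum.symm

lemma Convex.exists_sum_smul_eq_sum_smul {E ι : Type*} [AddCommGroup E] [Module ℝ E]
    {s : Set E} (hs : Convex ℝ s) (hne : s.Nonempty) (t : Finset ι) {r : ι → ℝ}
    (hr : ∀ i ∈ t, 0 ≤ r i) {z : ι → E} (hz : ∀ i ∈ t, z i ∈ s) :
    ∃ x ∈ s, (∑ i ∈ t, r i) • x = ∑ i ∈ t, r i • z i := by
  rcases (sum_nonneg hr).eq_or_lt with hzero | hpos
  · obtain ⟨x₀, hx₀⟩ := hne
    have hr0 : ∀ i ∈ t, r i = 0 := (sum_eq_zero_iff_of_nonneg hr).1 hzero.symm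
    refine ⟨x₀, hx₀, ?_⟩
    rw [← hzero, zero_smul, sum_eq_zero fun i hi => by rw [hr0 i hi, zero_smul]]
  · refine ⟨t.centerMass r z, hs.centerMass_mem hr hpos hz, ?_⟩
    rw [centerMass, smul_smul, mul_inv_cancel₀ hpos.ne', one_smul]

lemma condMaj_of_fintype {n ℓ m : ℕ} {P : Matrix (Fin n) (Fin ℓ) ℝ}
    {Q : Matrix (Fin n) (Fin m) ℝ} {ι : Type*} [Fintype ι]
    (D : ι → Matrix (Fin n) (Fin n) ℝ) (R : ι → Matrix (Fin ℓ) (Fin m) ℝ)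
    (hD : ∀ i, DStoch (D i)) (hR : ∀ i y w, 0 ≤ R i y w) (hRS : RowStoch (∑ i, R i))
    (hQ : Q = ∑ i, D i * P * R i) : CondMaj P Q := by
  let e := (Fintype.equivFin ι).symm
  refine ⟨Fintype.card ι, D ∘ e, R ∘ e, fun j => hD _, fun j => hR _, ?_, ?_⟩
  · rwa [Function.comp_def, e.sum_comp R]
  · rw [hQ]
    exact (e.sum_comp fun i => D i * P * R i).symm

section Columnwise

variable {n ℓ m : ℕ} {P : Matrix (Fin n) (Fin ℓ) ℝ} {Q : Matrix (Fin n) (Fin m) ℝ}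

theorem CondMaj.exists_columnwise (h : CondMaj P Q) :
    ∃ (D : Fin ℓ → Fin m → Matrix (Fin n) (Fin n) ℝ) (T : Matrix (Fin ℓ) (Fin m) ℝ),
      (∀ y w, DStoch (D y w)) ∧ RowStoch T ∧
      ∀ w x, Q x w = ∑ y, T y w * (D y w * P) x y := by
  obtain ⟨J, D, R, hD, hR, hRS, rfl⟩ := h
  have hmix : ∀ y w, ∃ D' ∈ doublyStochastic ℝ (Fin n),
      (∑ j, R j y w) • D' = ∑ j, R j y w • D j := fun y w =>
    convex_doublyStochastic.exists_sum_smul_eq_sum_smul ⟨1, one_mem _⟩ univ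
      (fun j _ => hR j y w) fun j _ => dStoch_iff_mem_doublyStochastic.1 (hD j)
  choose D' hD' hD'eq using hmix
  refine ⟨D', ∑ j, R j, fun y w => dStoch_iff_mem_doublyStochastic.2 (hD' y w), hRS,
    fun w x => ?_⟩
  calc (∑ j, D j * P * R j) x w
      = ∑ j, ∑ y, (D j * P) x y * R j y w := by
        simp only [Matrix.sum_apply, mul_apply (M := D _ * P)]
    _ = ∑ y, ((∑ j, R j y w • D j) * P) x y := by
        simp only [Matrix.sum_mul, Matrix.smul_mul, Matrix.sum_apply, Matrix.smul_apply,
          smul_eq_mul, mul_comm (R _ _ _)]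
        exact sum_comm
    _ = ∑ y, (∑ j, R j) y w * (D' y w * P) x y := by
        simp only [← hD'eq, Matrix.smul_mul, Matrix.smul_apply, smul_eq_mul, Matrix.sum_apply]

theorem condMaj_of_columnwise (D : Fin ℓ → Fin m → Matrix (Fin n) (Fin n) ℝ)
    (T : Matrix (Fin ℓ) (Fin m) ℝ) (hD : ∀ y w, DStoch (D y w)) (hT : RowStoch T)
    (hQ : ∀ w x, Q x w = ∑ y, T y w * (D y w * P) x y) : CondMaj P Q := by
  refine condMaj_of_fintype (fun p : Fin ℓ × Fin m => D p.1 p.2)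
    (fun p => single p.1 p.2 (T p.1 p.2)) (fun p => hD p.1 p.2) ?_ ?_ ?_
  · rintro ⟨y, w⟩ y' w'
    rw [single_apply]
    split_ifs
    exacts [hT.1 y w, le_rfl]
  · convert hT using 1
    rw [Fintype.sum_prod_type]
    exact (matrix_eq_sum_single T).symm
  · ext x w
    simp only [Fintype.sum_prod_type, Matrix.sum_apply, hQ w x]
    refine sum_congr rfl fun y _ => ?_
    rw [Fintype.sum_eq_single w fun w' hw' => mul_single_apply_of_ne _ _ _ _ _ hw'.symm _,
      mul_single_apply_same, mul_comm]

end Columnwise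

theorem stmt1_general {n ℓ m : ℕ} (P : Matrix (Fin n) (Fin ℓ) ℝ) (Q : Matrix (Fin n) (Fin m) ℝ) :
    CondMaj P Q ↔
      ∃ (D : Fin ℓ → Fin m → Matrix (Fin n) (Fin n) ℝ) (T : Matrix (Fin ℓ) (Fin m) ℝ),
        (∀ y w, DStoch (D y w)) ∧ RowStoch T ∧
        ∀ w x, Q x w = ∑ y, T y w * ∑ x', (D y w) x x' * P x' y :=
  ⟨CondMaj.exists_columnwise, fun ⟨D, T, hD, hT, hQ⟩ => condMaj_of_columnwise D T hD hT hQ⟩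

theorem stmt1 {n ℓ m : ℕ} (P : Matrix (Fin n) (Fin ℓ) ℝ) (Q : Matrix (Fin n) (Fin m) ℝ)
    (hP : ∀ x y, 0 ≤ P x y) (hQ : ∀ x w, 0 ≤ Q x w) :
    CondMaj P Q ↔
      ∃ (D : Fin ℓ → Fin m → Matrix (Fin n) (Fin n) ℝ) (T : Matrix (Fin ℓ) (Fin m) ℝ),
        (∀ y w, DStoch (D y w)) ∧ RowStoch T ∧
        ∀ w x, Q x w = ∑ y, T y w * ∑ x', (D y w) x x' * P x' y :=
  stmt1_general P Q
end

section
/- Let P (n×ℓ) and Q (n×m) be joint probability matrices with each column arranged in nonincreasing order. Then P ≻_c Q if and only if there exists an ℓ×m row-stochastic matrix T with LPT ≥ LQ entrywise, where L is the n×n lower-triangular matrix of all ones on and below the diagonal. -/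
/-!
Write `L A` for the column prefix sums of `A`. If `Q = ∑ D_j P R_j`, the `k`-th row of `L D_j`
is a vector with entries in `[0, 1]` summing to `k + 1`; paired with a nonincreasing column of
`P` it yields at most the sum of the first `k + 1` entries, so `L D_j P ≤ L P`, and multiplying
by `R_j ≥ 0` and summing gives `L Q ≤ L P T` with `T = ∑ R_j`.

Conversely, the last row of `L Q ≤ L P T` together with equal total mass forces each column of
`Q` to have the same sum as the corresponding column of `P T`, so the sorted column `Q_w` is
majorized by `(P T)_w`. A functional separating `Q_w` from the convex hull of the permutations of
`(P T)_w` would, once its coefficients are sorted, contradict Abel summation; hence Birkhoff's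
theorem gives a doubly stochastic `D_w` with `Q_w = D_w (P T)_w`, and `R_w = T` restricted to
column `w` completes the decomposition.
-/

open Matrix Finset

/-- The lower-triangular matrix of ones on and below the diagonal. -/
noncomputable def Lmat (n : ℕ) : Matrix (Fin n) (Fin n) ℝ :=
  Matrix.of fun i j => if j ≤ i then (1 : ℝ) else 0

section PrefixSums

variable {ι : Type*} [LinearOrder ι]

theorem mul_sum_le_sum_mul_of_antitone_of_prefix_nonneg {a d : ι → ℝ} (ha : Antitone a)
    (s : Finset ι) {c : ℝ} (hc : ∀ i ∈ s, c ≤ a i)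
    (hd : ∀ k ∈ s, 0 ≤ ∑ i ∈ s with i ≤ k, d i) :
    c * ∑ i ∈ s, d i ≤ ∑ i ∈ s, a i * d i := by
  induction s using Finset.induction_on_max generalizing c with
  | empty => simp
  | insert M s hlt ih =>
    have hM : M ∉ s := fun h => (hlt M h).false
    have ih' : a M * ∑ i ∈ s, d i ≤ ∑ i ∈ s, a i * d i := by
      refine ih (fun i hi => ha (hlt i hi).le) fun k hk => ?_
      have := hd k (mem_insert_of_mem hk)
      rwa [filter_insert, if_neg (not_le.2 (hlt k hk))] at this
    have htot : 0 ≤ d M + ∑ i ∈ s, d i := by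
      have := hd M (mem_insert_self M s)
      rwa [filter_insert, if_pos le_rfl, filter_true_of_mem fun i hi => (hlt i hi).le,
        sum_insert hM] at this
    rw [sum_insert hM, sum_insert hM]
    calc c * (d M + ∑ i ∈ s, d i) ≤ a M * (d M + ∑ i ∈ s, d i) :=
          mul_le_mul_of_nonneg_right (hc M (mem_insert_self M s)) htot
      _ ≤ a M * d M + ∑ i ∈ s, a i * d i := by linarith

variable [Fintype ι] [LocallyFiniteOrderBot ι]

theorem sum_mul_le_sum_mul_of_sum_Iic_le {a x y : ι → ℝ} (ha : Antitone a)
    (hxy : ∀ k, ∑ i ∈ Iic k, x i ≤ ∑ i ∈ Iic k, y i) (hsum : ∑ i, x i = ∑ i, y i) :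
    ∑ i, a i * x i ≤ ∑ i, a i * y i := by
  obtain ⟨c, hc⟩ := (Set.finite_range a).bddBelow
  have h := mul_sum_le_sum_mul_of_antitone_of_prefix_nonneg (d := y - x) ha univ
    (c := c) (fun i _ => hc ⟨i, rfl⟩) fun k _ => by
      simpa [filter_ge_eq_Iic, sum_sub_distrib] using hxy k
  simp only [Pi.sub_apply, mul_sub, sum_sub_distrib, hsum, sub_self, mul_zero] at h
  linarith

theorem sum_mul_le_sum_Iic_of_antitone {v c : ι → ℝ} {k : ι} (hv : Antitone v)
    (hc₀ : ∀ i, 0 ≤ c i) (hc₁ : ∀ i, c i ≤ 1) (hcs : ∑ i, c i = #(Iic k)) :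
    ∑ i, c i * v i ≤ ∑ i ∈ Iic k, v i := by
  set e : ι → ℝ := fun i => if i ≤ k then 1 else 0
  have hsign : ∀ i, (c i - e i) * (v i - v k) ≤ 0 := fun i => by
    by_cases h : i ≤ k
    · exact mul_nonpos_of_nonpos_of_nonneg (by simp [e, h, hc₁ i]) (sub_nonneg.2 (hv h))
    · exact mul_nonpos_of_nonneg_of_nonpos (by simp [e, h, hc₀ i])
        (sub_nonpos.2 (hv (le_of_not_ge h)))
  have hev : ∑ i, e i * v i = ∑ i ∈ Iic k, v i := by
    simp [e, ite_mul, ← sum_filter, filter_ge_eq_Iic]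
  have hce : ∑ i, e i = ∑ i, c i := by
    simp [e, hcs, filter_ge_eq_Iic]
  have := sum_nonpos fun i (_ : i ∈ univ) => hsign i
  simp only [sub_mul, mul_sub, sum_sub_distrib, ← sum_mul, hce] at this
  linarith

end PrefixSums

section Majorization

variable {n : ℕ} {x y : Fin n → ℝ}

theorem exists_perm_dotProduct_le_of_sum_Iic_le (hx : Antitone x)
    (hxy : ∀ k, ∑ i ∈ Iic k, x i ≤ ∑ i ∈ Iic k, y i) (hsum : ∑ i, x i = ∑ i, y i)
    (c : Fin n → ℝ) : ∃ σ : Equiv.Perm (Fin n), c ⬝ᵥ x ≤ c ⬝ᵥ (y ∘ σ) := by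
  set τ := Tuple.sort (OrderDual.toDual ∘ c)
  have hcτ : Antitone (c ∘ τ) := monotone_toDual_comp_iff.1 (Tuple.monotone_sort _)
  refine ⟨τ.symm, ?_⟩
  calc c ⬝ᵥ x = ∑ k, c (τ k) * x (τ k) := (Equiv.sum_comp τ fun i => c i * x i).symm
    _ ≤ ∑ k, c (τ k) * x k := (hcτ.monovary hx).sum_mul_comp_perm_le_sum_mul
    _ ≤ ∑ k, c (τ k) * y k := sum_mul_le_sum_mul_of_sum_Iic_le hcτ hxy hsum
    _ = c ⬝ᵥ (y ∘ τ.symm) := by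
      rw [dotProduct, ← Equiv.sum_comp τ (fun i => c i * (y ∘ τ.symm) i)]
      simp

theorem mem_convexHull_perm_of_sum_Iic_le (hx : Antitone x)
    (hxy : ∀ k, ∑ i ∈ Iic k, x i ≤ ∑ i ∈ Iic k, y i) (hsum : ∑ i, x i = ∑ i, y i) :
    x ∈ convexHull ℝ (Set.range fun σ : Equiv.Perm (Fin n) => y ∘ σ) := by
  by_contra hx_not
  obtain ⟨f, u, hfu, hux⟩ := geometric_hahn_banach_closed_point (convex_convexHull ℝ _)
    ((Set.finite_range _).isClosed_convexHull (𝕜 := ℝ)) hx_not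
  set c : Fin n → ℝ := fun i => f fun j => if i = j then 1 else 0
  have hf : ∀ v, f v = c ⬝ᵥ v := fun v => by
    rw [dotProduct_comm]
    exact LinearMap.pi_apply_eq_sum_univ f.toLinearMap v
  obtain ⟨σ, hσ⟩ := exists_perm_dotProduct_le_of_sum_Iic_le hx hxy hsum c
  have := hfu _ (subset_convexHull ℝ _ ⟨σ, rfl⟩)
  rw [hf] at this hux
  linarith

theorem exists_mem_doublyStochastic_mulVec_eq_of_sum_Iic_le (hx : Antitone x)
    (hxy : ∀ k, ∑ i ∈ Iic k, x i ≤ ∑ i ∈ Iic k, y i) (hsum : ∑ i, x i = ∑ i, y i) :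
    ∃ D ∈ doublyStochastic ℝ (Fin n), D *ᵥ y = x := by
  have himage : (Matrix.mulVecBilin ℝ ℝ).flip y '' (doublyStochastic ℝ (Fin n) : Set _) =
      convexHull ℝ (Set.range fun σ : Equiv.Perm (Fin n) => y ∘ σ) := by
    rw [doublyStochastic_eq_convexHull_permMatrix, LinearMap.image_convexHull]
    congr 1
    ext v
    simp [permMatrix_mulVec]
  exact (himage ▸ mem_convexHull_perm_of_sum_Iic_le hx hxy hsum :)

end Majorization

section Matrices

variable {n ℓ m : ℕ} {α : Type*}

theorem Lmat_mul_apply (A : Matrix (Fin n) α ℝ) (k : Fin n) (w : α) :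
    (Lmat n * A) k w = ∑ i ∈ Iic k, A i w := by
  simp [Lmat, Matrix.mul_apply, ite_mul, ← sum_filter, filter_ge_eq_Iic]

theorem mul_apply_le_mul_apply {κ : Type*} [Fintype κ] {A B : Matrix (Fin n) κ ℝ}
    {R : Matrix κ α ℝ} {k : Fin n} (hAB : ∀ y, A k y ≤ B k y) (hR : ∀ y w, 0 ≤ R y w)
    (w : α) :
    (A * R) k w ≤ (B * R) k w :=
  sum_le_sum fun y _ => mul_le_mul_of_nonneg_right (hAB y) (hR y w)

theorem Lmat_mul_doublyStochastic_mul_le {D : Matrix (Fin n) (Fin n) ℝ} (hD : DStoch D)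
    {P : Matrix (Fin n) α ℝ} (hP : ∀ y, Antitone fun x => P x y) (k : Fin n) (y : α) :
    (Lmat n * (D * P)) k y ≤ (Lmat n * P) k y := by
  obtain ⟨hD₀, hDrow, hDcol⟩ := hD
  rw [← Matrix.mul_assoc, Matrix.mul_apply]
  simp_rw [Lmat_mul_apply]
  refine sum_mul_le_sum_Iic_of_antitone (hP y) (fun x => sum_nonneg fun i _ => hD₀ i x)
    (fun x => (sum_le_sum_of_subset_of_nonneg (subset_univ _) fun i _ _ => hD₀ i x).trans
      (hDcol x).le) ?_
  rw [sum_comm]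
  simp [hDrow]

theorem colSum_le_of_Lmat_mul_le {A B : Matrix (Fin n) (Fin m) ℝ} {w : Fin m}
    (h : ∀ k, (Lmat n * A) k w ≤ (Lmat n * B) k w) : ColSum A w ≤ ColSum B w := by
  cases n with
  | zero => simp [ColSum]
  | succ n => simpa [Lmat_mul_apply, ColSum, Iic_top] using h ⊤

theorem sum_sum_mul_of_rowStoch (P : Matrix (Fin n) (Fin ℓ) ℝ)
    {T : Matrix (Fin ℓ) (Fin m) ℝ} (hT : RowStoch T) :
    ∑ x, ∑ w, (P * T) x w = ∑ x, ∑ y, P x y := by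
  simp_rw [Matrix.mul_apply]
  refine sum_congr rfl fun x _ => ?_
  rw [sum_comm]
  simp [← mul_sum, hT.2]

end Matrices

section CondMaj

variable {n ℓ m : ℕ} {P : Matrix (Fin n) (Fin ℓ) ℝ} {Q : Matrix (Fin n) (Fin m) ℝ}

theorem CondMaj.exists_rowStoch_Lmat_mul_le (hP : ∀ y, Antitone fun x => P x y)
    (h : CondMaj P Q) :
    ∃ T : Matrix (Fin ℓ) (Fin m) ℝ, RowStoch T ∧
      ∀ k w, (Lmat n * Q) k w ≤ (Lmat n * P * T) k w := by
  obtain ⟨J, D, R, hD, hR, hT, rfl⟩ := h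
  refine ⟨∑ j, R j, hT, fun k w => ?_⟩
  simp only [Matrix.mul_sum, Matrix.sum_apply, ← Matrix.mul_assoc]
  refine sum_le_sum fun j _ => mul_apply_le_mul_apply (fun y => ?_) (hR j) w
  simpa [Matrix.mul_assoc] using Lmat_mul_doublyStochastic_mul_le (hD j) hP k y

theorem condMaj_of_forall_col_eq_mul {T : Matrix (Fin ℓ) (Fin m) ℝ} (hT : RowStoch T)
    {D : Fin m → Matrix (Fin n) (Fin n) ℝ} (hD : ∀ w, DStoch (D w))
    (hQ : ∀ x w, Q x w = (D w * (P * T)) x w) : CondMaj P Q := by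
  refine ⟨m, D, fun w => T * diagonal (Pi.single w (1 : ℝ)), hD, fun w y v => ?_, ?_, ?_⟩
  · simp only [mul_diagonal]
    exact mul_nonneg (hT.1 y v) (by by_cases h : v = w <;> simp [h])
  · convert hT
    ext y v
    simp [Matrix.sum_apply, mul_diagonal, Pi.single_apply]
  · ext x v
    simp [Matrix.sum_apply, ← Matrix.mul_assoc, mul_diagonal, Pi.single_apply, hQ]

theorem condMaj_of_Lmat_mul_le {T : Matrix (Fin ℓ) (Fin m) ℝ}
    (hmass : ∑ x, ∑ y, P x y = ∑ x, ∑ w, Q x w) (hQ : ∀ w, Antitone fun x => Q x w)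
    (hT : RowStoch T) (hLe : ∀ k w, (Lmat n * Q) k w ≤ (Lmat n * P * T) k w) :
    CondMaj P Q := by
  rw [Matrix.mul_assoc] at hLe
  have hle : ∀ w, ColSum Q w ≤ ColSum (P * T) w :=
    fun w => colSum_le_of_Lmat_mul_le fun k => hLe k w
  have htot : ∑ w, ColSum Q w = ∑ w, ColSum (P * T) w := by
    simp only [ColSum]
    rw [sum_comm, ← hmass, ← sum_sum_mul_of_rowStoch P hT, sum_comm]
  have hcol : ∀ w, ColSum Q w = ColSum (P * T) w :=
    fun w => (sum_eq_sum_iff_of_le fun w _ => hle w).1 htot w (mem_univ w)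
  choose D hD hDQ using fun w => exists_mem_doublyStochastic_mulVec_eq_of_sum_Iic_le (hQ w)
    (fun k => by simpa only [Lmat_mul_apply] using hLe k w) (hcol w)
  exact condMaj_of_forall_col_eq_mul hT (fun w => mem_doublyStochastic_iff_sum.1 (hD w))
    fun x w => (congrFun (hDQ w) x).symm

end CondMaj

theorem stmt2 {n ℓ m : ℕ} (P : Matrix (Fin n) (Fin ℓ) ℝ) (Q : Matrix (Fin n) (Fin m) ℝ)
    (hP : JointProb P) (hQ : JointProb Q)
    (hPs : ∀ y, ∀ x x' : Fin n, x ≤ x' → P x' y ≤ P x y)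
    (hQs : ∀ w, ∀ x x' : Fin n, x ≤ x' → Q x' w ≤ Q x w) :
    CondMaj P Q ↔
      ∃ T : Matrix (Fin ℓ) (Fin m) ℝ, RowStoch T ∧
        ∀ k w, (Lmat n * Q) k w ≤ (Lmat n * P * T) k w := by
  refine ⟨CondMaj.exists_rowStoch_Lmat_mul_le fun y => hPs y, ?_⟩
  rintro ⟨T, hT, hLe⟩
  exact condMaj_of_Lmat_mul_le (hP.2.trans hQ.2.symm) (fun w => hQs w) hT hLe
end

section
/- Let A be an m×m row-stochastic matrix and Q an n×m matrix with nonnegative entries, in standard form (each column sorted nonincreasingly, no column a nonnegative multiple of another, no zero columns, columns ordered as in the standard form). If Q = QA, then A is the m×m identity matrix. -/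
/-!
Let `s` be the vector of column sums of `Q`; it is positive and `s A = s`. Every row `r` of `Q`
also satisfies `r A = r`, so `f = r / s` is harmonic for the time reversal of `A` with respect
to `s`, and the Dirichlet form `∑ s_u A_uw (f_u - f_w)²` vanishes. Hence `A_vw > 0` forces
`Q_xv / s_v = Q_xw / s_w` for every row `x`, i.e. columns `v` and `w` are proportional. In
standard form this rules out every off-diagonal positive entry, and a row-stochastic matrix
with zero off-diagonal part is the identity.
-/

open Matrix Finset

/-- Partial column sum of the first `k` entries of column `w`. -/
noncomputable def PartSum {n m : ℕ} (Q : Matrix (Fin n) (Fin m) ℝ) (k : ℕ) (w : Fin m) : ℝ :=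
  ∑ x ∈ Finset.univ.filter (fun x : Fin n => (x : ℕ) < k), Q x w

/-- Standard form: columns sorted nonincreasingly, no zero columns, no column a
nonnegative multiple of another, and columns ordered by nonincreasing column sums,
ties broken lexicographically by nonincreasing partial sums. -/
def StdForm {n m : ℕ} (Q : Matrix (Fin n) (Fin m) ℝ) : Prop :=
  (∀ w, ∀ x x' : Fin n, x ≤ x' → Q x' w ≤ Q x w) ∧
  (∀ w, ∃ x, Q x w ≠ 0) ∧
  (∀ w w' : Fin m, w ≠ w' → ∀ c : ℝ, 0 ≤ c → ¬ (∀ x, Q x w = c * Q x w')) ∧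
  (∀ w w' : Fin m, w < w' →
    ColSum Q w' < ColSum Q w ∨
    (ColSum Q w' = ColSum Q w ∧ ∃ k : ℕ,
      (∀ j < k, PartSum Q j w = PartSum Q j w') ∧ PartSum Q k w' < PartSum Q k w))

section DirichletForm

variable {ι : Type*} [Fintype ι]

def dirichletForm (A : Matrix ι ι ℝ) (s f : ι → ℝ) : ℝ :=
  ∑ u, ∑ w, s u * A u w * (f u - f w) ^ 2

theorem dirichletForm_eq_zero {A : Matrix ι ι ℝ} (hA : ∀ u, ∑ w, A u w = 1) {s f : ι → ℝ}
    (hs : s ᵥ* A = s) (hsf : (s * f) ᵥ* A = s * f) : dirichletForm A s f = 0 := by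
  have hs' : ∀ w, ∑ u, s u * A u w = s w := fun w => by
    rw [← vecMul_apply_eq_sum, hs]
  have hsf' : ∀ w, ∑ u, s u * f u * A u w = s w * f w := fun w => by
    rw [← Pi.mul_apply s f w, ← hsf, vecMul_apply_eq_sum]; rfl
  -- after expanding the square, each of the three sums equals `∑ u, s u * f u ^ 2`
  calc dirichletForm A s f
      = ∑ u, (∑ w, A u w) * (s u * f u ^ 2) + ∑ w, (∑ u, s u * A u w) * f w ^ 2
          - 2 * ∑ w, (∑ u, s u * f u * A u w) * f w := by
        simp only [dirichletForm, sum_mul, mul_sum]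
        rw [sum_comm (s := univ) (t := univ) (f := fun w u => s u * A u w * f w ^ 2),
          sum_comm (s := univ) (t := univ) (f := fun w u => 2 * (s u * f u * A u w * f w)),
          ← sum_add_distrib, ← sum_sub_distrib]
        refine sum_congr rfl fun u _ => ?_
        rw [← sum_add_distrib, ← sum_sub_distrib]
        exact sum_congr rfl fun w _ => by ring
    _ = 0 := by
        simp only [hA, hs', hsf', one_mul]
        simp only [mul_assoc, ← sq]
        ring

theorem eq_of_dirichletForm_eq_zero {A : Matrix ι ι ℝ} (hA : ∀ u w, 0 ≤ A u w) {s f : ι → ℝ}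
    (hs : ∀ u, 0 ≤ s u) (h : dirichletForm A s f = 0) {u w : ι} (hsu : 0 < s u)
    (huw : 0 < A u w) : f u = f w := by
  have hterm : ∀ u w, 0 ≤ s u * A u w * (f u - f w) ^ 2 := fun u w => by
    have := hs u; have := hA u w; positivity
  have hrow := (sum_eq_zero_iff_of_nonneg fun u _ => sum_nonneg fun w _ => hterm u w).1 h u
    (mem_univ u)
  have huw0 := (sum_eq_zero_iff_of_nonneg fun w _ => hterm u w).1 hrow w (mem_univ w)
  rw [mul_eq_zero, pow_eq_zero_iff two_ne_zero, sub_eq_zero] at huw0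
  exact huw0.resolve_left (mul_pos hsu huw).ne'

end DirichletForm

theorem Matrix.eq_one_of_offDiag_eq_zero {ι : Type*} [Fintype ι] [DecidableEq ι]
    {A : Matrix ι ι ℝ} (hA : ∀ u, ∑ w, A u w = 1) (hoff : ∀ u w, u ≠ w → A u w = 0) :
    A = 1 := by
  ext u w
  rcases eq_or_ne u w with rfl | huw
  · rw [one_apply_eq, ← hA u, Fintype.sum_eq_single u fun w hw => hoff u w hw.symm]
  · rw [one_apply_ne huw, hoff u w huw]

theorem exists_col_eq_smul_col_of_mul_eq_self {ι κ : Type*} [Fintype ι] [Fintype κ]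
    {Q : Matrix ι κ ℝ} {A : Matrix κ κ ℝ} (hQ : ∀ x w, 0 ≤ Q x w)
    (hQcol : ∀ w, ∃ x, Q x w ≠ 0) (hA0 : ∀ u w, 0 ≤ A u w) (hA1 : ∀ u, ∑ w, A u w = 1)
    (h : Q * A = Q) {v w : κ} (hvw : 0 < A v w) : ∃ c : ℝ, 0 ≤ c ∧ ∀ x, Q x v = c * Q x w := by
  set s : κ → ℝ := 1 ᵥ* Q
  have hs_apply : ∀ u, s u = ∑ x, Q x u := fun u => by simp [s, vecMul_apply_eq_sum]
  have hs_pos : ∀ u, 0 < s u := fun u => by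
    obtain ⟨x, hx⟩ := hQcol u
    rw [hs_apply]
    exact sum_pos' (fun y _ => hQ y u) ⟨x, mem_univ x, (hQ x u).lt_of_ne' hx⟩
  have hs_fix : s ᵥ* A = s := by rw [vecMul_vecMul, h]
  refine ⟨s v / s w, div_nonneg (hs_pos v).le (hs_pos w).le, fun x => ?_⟩
  have hrow : s * (fun u => Q x u / s u) = Q x := funext fun u => mul_div_cancel₀ _ (hs_pos u).ne'
  have hratio : Q x v / s v = Q x w / s w := by
    refine eq_of_dirichletForm_eq_zero (f := fun u => Q x u / s u) hA0 (fun u => (hs_pos u).le)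
      (dirichletForm_eq_zero hA1 hs_fix ?_) (hs_pos v) hvw
    rw [hrow, ← mul_apply_eq_vecMul, h]
  rw [div_eq_div_iff (hs_pos v).ne' (hs_pos w).ne'] at hratio
  field_simp [(hs_pos w).ne']
  linarith

theorem stmt4 {n m : ℕ} (Q : Matrix (Fin n) (Fin m) ℝ) (A : Matrix (Fin m) (Fin m) ℝ)
    (hQ : ∀ x w, 0 ≤ Q x w) (hstd : StdForm Q) (hA : RowStoch A)
    (h : Q = Q * A) : A = 1 := by
  obtain ⟨hA0, hA1⟩ := hA
  obtain ⟨-, hQcol, hnonprop, -⟩ := hstd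
  refine Matrix.eq_one_of_offDiag_eq_zero hA1 fun v w hvw => ?_
  by_contra hne
  obtain ⟨c, hc, hcol⟩ :=
    exists_col_eq_smul_col_of_mul_eq_self hQ hQcol hA0 hA1 h.symm ((hA0 v w).lt_of_ne' hne)
  exact hnonprop v w hvw c hc hcol
end

section
/- Conditional majorization is antisymmetric with respect to the standard form: if P ≻_c Q and Q ≻_c P for joint probability matrices P and Q, then P↓ = Q↓, where P↓ denotes the standard form. Hence ≻_c is a partial order on standard forms. -/
open Matrix Finset

/-!
Write `Q = ∑ⱼ Dⱼ P Rⱼ`. A doubly stochastic matrix can only lower the partial sums of a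
nonincreasing column, so every partial column sum of `Q` is at most the corresponding one of
`P S` with `S = ∑ⱼ Rⱼ` row-stochastic; in particular the total of the `k`-th partial sums over all
columns cannot increase under `≻_c`. Majorization in both directions therefore forces equality
everywhere, i.e. `Q = P S` and `P = Q S'` with `S`, `S'` row-stochastic.

Now rank the columns by `ψ / φ`, where `φ` is the column sum and `ψ` a linear functional that
separates the normalized columns. The top column of `Q` is a mixture of columns of `P` of no
larger ratio and vice versa, so the two top ratios agree, the mixing weights concentrate on the
two top columns with weight `1`, and these columns coincide and can be removed. By induction `P`
and `Q` have the same columns, and the standard-form order, which makes the lexicographic key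
(column sum, partial sums) strictly decreasing, puts them in the same order.
-/

lemma sum_mul_le_sum_of_threshold {ι : Type*} [Fintype ι] (A : Finset ι) {a v : ι → ℝ} (t : ℝ)
    (ha0 : ∀ x, 0 ≤ a x) (ha1 : ∀ x, a x ≤ 1) (hsum : ∑ x, a x = #A)
    (hA : ∀ x ∈ A, t ≤ v x) (hAc : ∀ x ∉ A, v x ≤ t) :
    ∑ x, a x * v x ≤ ∑ x ∈ A, v x := by
  classical
  have hterm : ∀ x, (a x - if x ∈ A then 1 else 0) * (v x - t) ≤ 0 := by
    intro x
    split_ifs with hx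
    · exact mul_nonpos_of_nonpos_of_nonneg (by linarith [ha1 x]) (by linarith [hA x hx])
    · exact mul_nonpos_of_nonneg_of_nonpos (by linarith [ha0 x]) (by linarith [hAc x hx])
  have hexpand : ∑ x, (a x - if x ∈ A then 1 else 0) * (v x - t)
      = ∑ x, a x * v x - ∑ x ∈ A, v x := by
    simp only [sub_mul, mul_sub, ite_mul, one_mul, zero_mul, sum_sub_distrib, ← sum_mul, hsum,
      sum_ite_mem, univ_inter, sum_const, nsmul_eq_mul]
    ring
  linarith [sum_nonpos (s := univ) fun x _ => hterm x]

lemma Module.exists_dual_injOn (K : Type*) {M : Type*} [Field K] [Infinite K] [AddCommGroup M]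
    [Module K M] {s : Set M} (hs : s.Finite) : ∃ f : Module.Dual K M, Set.InjOn f s := by
  have : Finite {v : s × s // v.1 ≠ v.2} := by
    have := hs.to_subtype
    infer_instance
  obtain ⟨f, hf⟩ := Module.exists_dual_forall_apply_ne_zero (K := K)
    (fun v : {v : s × s // v.1 ≠ v.2} => (v.1.1 : M) - v.1.2)
    fun v => sub_ne_zero.mpr (Subtype.coe_injective.ne v.2)
  refine ⟨f, fun a ha b hb hab => by_contra fun hne => ?_⟩
  exact hf ⟨(⟨a, ha⟩, ⟨b, hb⟩), fun h => hne (congrArg Subtype.val h)⟩ (by simp [hab])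

section Mixture

variable {E ι κ : Type*} [AddCommGroup E] [Module ℝ E]

def IsMixture (S : ι → κ → ℝ) (Y : Finset ι) (W : Finset κ) (p : ι → E) (q : κ → E) : Prop :=
  (∀ y ∈ Y, ∑ w ∈ W, S y w = 1) ∧ ∀ w ∈ W, q w = ∑ y ∈ Y, S y w • p y

lemma IsMixture.erase [DecidableEq ι] [DecidableEq κ] {S : ι → κ → ℝ} {Y : Finset ι}
    {W : Finset κ} {p : ι → E} {q : κ → E} (h : IsMixture S Y W p q) {y₀ : ι} {w₀ : κ}
    (hrow : ∀ w ∈ W, w ≠ w₀ → S y₀ w = 0) (hcol : ∀ y ∈ Y, y ≠ y₀ → S y w₀ = 0) :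
    IsMixture S (Y.erase y₀) (W.erase w₀) p q := by
  refine ⟨fun y hy => ?_, fun w hw => ?_⟩
  · rw [sum_erase _ (hcol y (mem_of_mem_erase hy) (ne_of_mem_erase hy))]
    exact h.1 y (mem_of_mem_erase hy)
  · rw [sum_erase _ (by rw [hrow w (mem_of_mem_erase hw) (ne_of_mem_erase hw), zero_smul])]
    exact h.2 w (mem_of_mem_erase hw)

lemma IsMixture.eq_zero_of_eq_one [DecidableEq κ] {S : ι → κ → ℝ} {Y : Finset ι}
    {W : Finset κ} {p : ι → E} {q : κ → E} (h : IsMixture S Y W p q) (hS : ∀ y w, 0 ≤ S y w)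
    {y₀ : ι} {w₀ : κ} (hy₀ : y₀ ∈ Y) (hw₀ : w₀ ∈ W) (h1 : S y₀ w₀ = 1) :
    ∀ w ∈ W, w ≠ w₀ → S y₀ w = 0 := by
  have hrest : ∑ w ∈ W.erase w₀, S y₀ w = 0 := by
    linarith [h.1 y₀ hy₀, add_sum_erase W (S y₀) hw₀]
  exact fun w hw hne =>
    (sum_eq_zero_iff_of_nonneg fun w _ => hS y₀ w).mp hrest w (mem_erase.mpr ⟨hne, hw⟩)

lemma IsMixture.le_one {S : ι → κ → ℝ} {Y : Finset ι} {W : Finset κ} {p : ι → E} {q : κ → E}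
    (h : IsMixture S Y W p q) (hS : ∀ y w, 0 ≤ S y w) {y : ι} {w : κ} (hy : y ∈ Y)
    (hw : w ∈ W) : S y w ≤ 1 :=
  h.1 y hy ▸ single_le_sum (fun w _ => hS y w) hw

variable (φ ψ : Module.Dual ℝ E)

lemma apply_sum_smul_le {Y : Finset ι} {c : ι → ℝ} {p : ι → E} {α : ℝ}
    (hc : ∀ y ∈ Y, 0 ≤ c y) (hp : ∀ y ∈ Y, ψ (p y) ≤ α * φ (p y)) :
    ψ (∑ y ∈ Y, c y • p y) ≤ α * φ (∑ y ∈ Y, c y • p y) := by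
  simp only [map_sum, map_smul, smul_eq_mul, mul_sum]
  exact sum_le_sum fun y hy => by nlinarith [hc y hy, hp y hy]

lemma eq_zero_of_le_apply_sum_smul {Y : Finset ι} {c : ι → ℝ} {p : ι → E} {α : ℝ} {y₀ : ι}
    (hc : ∀ y ∈ Y, 0 ≤ c y) (hp : ∀ y ∈ Y, ψ (p y) ≤ α * φ (p y))
    (hlt : ∀ y ∈ Y, y ≠ y₀ → ψ (p y) < α * φ (p y))
    (hge : α * φ (∑ y ∈ Y, c y • p y) ≤ ψ (∑ y ∈ Y, c y • p y)) :
    ∀ y ∈ Y, y ≠ y₀ → c y = 0 := by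
  have hgap : ∑ y ∈ Y, c y * (α * φ (p y) - ψ (p y)) = 0 := by
    refine le_antisymm ?_ (sum_nonneg fun y hy => mul_nonneg (hc y hy) (by linarith [hp y hy]))
    simp only [map_sum, map_smul, smul_eq_mul, mul_sum] at hge
    simp only [mul_sub, sum_sub_distrib]
    linarith [show ∑ y ∈ Y, c y * (α * φ (p y)) = ∑ y ∈ Y, α * (c y * φ (p y)) from
      sum_congr rfl fun y _ => by ring]
  intro y hy hne
  have hy0 := (sum_eq_zero_iff_of_nonneg fun y hy =>
    mul_nonneg (hc y hy) (by linarith [hp y hy])).mp hgap y hy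
  exact (mul_eq_zero.mp hy0).resolve_right (by linarith [hlt y hy hne])

variable {S : ι → κ → ℝ} {S' : κ → ι → ℝ} {Y : Finset ι} {W : Finset κ} {p : ι → E} {q : κ → E}

lemma IsMixture.div_le (h : IsMixture S Y W p q) (hS : ∀ y w, 0 ≤ S y w)
    (hp : ∀ y, 0 < φ (p y)) (hq : ∀ w, 0 < φ (q w)) {α : ℝ}
    (hα : ∀ y ∈ Y, ψ (p y) / φ (p y) ≤ α) {w : κ} (hw : w ∈ W) : ψ (q w) / φ (q w) ≤ α := by
  rw [div_le_iff₀ (hq w), h.2 w hw]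
  exact apply_sum_smul_le φ ψ (fun y _ => hS y w) fun y hy => (div_le_iff₀ (hp y)).mp (hα y hy)

lemma IsMixture.eq_zero_of_le_div (h : IsMixture S Y W p q) (hS : ∀ y w, 0 ≤ S y w)
    (hp : ∀ y, 0 < φ (p y)) (hq : ∀ w, 0 < φ (q w))
    (hpψ : Function.Injective fun y => ψ (p y) / φ (p y)) {y₀ : ι}
    (hy₀ : ∀ y ∈ Y, ψ (p y) / φ (p y) ≤ ψ (p y₀) / φ (p y₀)) {w₀ : κ} (hw₀ : w₀ ∈ W)
    (hle : ψ (p y₀) / φ (p y₀) ≤ ψ (q w₀) / φ (q w₀)) : ∀ y ∈ Y, y ≠ y₀ → S y w₀ = 0 := by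
  rw [le_div_iff₀ (hq w₀), h.2 w₀ hw₀] at hle
  refine eq_zero_of_le_apply_sum_smul φ ψ (fun y _ => hS y w₀)
    (fun y hy => (div_le_iff₀ (hp y)).mp (hy₀ y hy)) (fun y hy hne => ?_) hle
  exact (div_lt_iff₀ (hp y)).mp (lt_of_le_of_ne (hy₀ y hy) (hpψ.ne hne))

lemma IsMixture.exists_eq_and_isMixture_erase [DecidableEq ι] [DecidableEq κ]
    (h : IsMixture S Y W p q) (h' : IsMixture S' W Y q p)
    (hS : ∀ y w, 0 ≤ S y w) (hS' : ∀ w y, 0 ≤ S' w y)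
    (hp : ∀ y, 0 < φ (p y)) (hq : ∀ w, 0 < φ (q w))
    (hpψ : Function.Injective fun y => ψ (p y) / φ (p y))
    (hqψ : Function.Injective fun w => ψ (q w) / φ (q w)) (hY : Y.Nonempty) (hW : W.Nonempty) :
    ∃ y₀ ∈ Y, ∃ w₀ ∈ W, q w₀ = p y₀ ∧
      IsMixture S (Y.erase y₀) (W.erase w₀) p q ∧ IsMixture S' (W.erase w₀) (Y.erase y₀) q p := by
  obtain ⟨y₀, hy₀, hy₀max⟩ := exists_max_image Y (fun y => ψ (p y) / φ (p y)) hY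
  obtain ⟨w₀, hw₀, hw₀max⟩ := exists_max_image W (fun w => ψ (q w) / φ (q w)) hW
  have hcol := h.eq_zero_of_le_div φ ψ hS hp hq hpψ hy₀max hw₀
    (h'.div_le φ ψ hS' hq hp hw₀max hy₀)
  have hcol' := h'.eq_zero_of_le_div φ ψ hS' hq hp hqψ hw₀max hy₀
    (h.div_le φ ψ hS hp hq hy₀max hw₀)
  have hq₀ : q w₀ = S y₀ w₀ • p y₀ := (h.2 w₀ hw₀).trans <|
    sum_eq_single_of_mem y₀ hy₀ fun y hy hne => by rw [hcol y hy hne, zero_smul]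
  have hp₀ : p y₀ = S' w₀ y₀ • q w₀ := (h'.2 y₀ hy₀).trans <|
    sum_eq_single_of_mem w₀ hw₀ fun w hw hne => by rw [hcol' w hw hne, zero_smul]
  have hprod : S' w₀ y₀ * S y₀ w₀ = 1 := by
    have hφ := congrArg φ hp₀
    rw [hq₀, smul_smul, map_smul, smul_eq_mul] at hφ
    exact (mul_eq_right₀ (hp y₀).ne').mp hφ.symm
  have h1 : S y₀ w₀ = 1 := by
    nlinarith [h.le_one hS hy₀ hw₀, h'.le_one hS' hw₀ hy₀, hS y₀ w₀, hS' w₀ y₀]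
  have h1' : S' w₀ y₀ = 1 := by rwa [h1, mul_one] at hprod
  exact ⟨y₀, hy₀, w₀, hw₀, by rw [hq₀, h1, one_smul],
    h.erase (h.eq_zero_of_eq_one hS hy₀ hw₀ h1) hcol,
    h'.erase (h'.eq_zero_of_eq_one hS' hw₀ hy₀ h1') hcol'⟩

theorem IsMixture.exists_eq (h : IsMixture S Y W p q) (h' : IsMixture S' W Y q p)
    (hS : ∀ y w, 0 ≤ S y w) (hS' : ∀ w y, 0 ≤ S' w y)
    (hp : ∀ y, 0 < φ (p y)) (hq : ∀ w, 0 < φ (q w))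
    (hpψ : Function.Injective fun y => ψ (p y) / φ (p y))
    (hqψ : Function.Injective fun w => ψ (q w) / φ (q w)) :
    ∀ w ∈ W, ∃ y ∈ Y, q w = p y := by
  classical
  induction Y using Finset.strongInduction generalizing W with
  | H Y ih =>
  intro w hw
  have hY : Y.Nonempty := by
    rw [nonempty_iff_ne_empty]
    rintro rfl
    simpa [h.2 w hw] using hq w
  obtain ⟨y₀, hy₀, w₀, hw₀, heq, hmix, hmix'⟩ :=
    h.exists_eq_and_isMixture_erase φ ψ h' hS hS' hp hq hpψ hqψ hY ⟨w, hw⟩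
  by_cases hw₀' : w = w₀
  · exact ⟨y₀, hy₀, hw₀' ▸ heq⟩
  obtain ⟨y, hy, hqy⟩ := ih _ (erase_ssubset hy₀) hmix hmix' w (mem_erase.mpr ⟨hw₀', hw⟩)
  exact ⟨y, mem_of_mem_erase hy, hqy⟩

end Mixture

section PartSum

variable {n ℓ m : ℕ}

lemma partSum_succ (Q : Matrix (Fin n) (Fin m) ℝ) (x : Fin n) (w : Fin m) :
    PartSum Q (x + 1) w = Q x w + PartSum Q x w := by
  have : univ.filter (fun i : Fin n => (i : ℕ) < x + 1)
      = insert x (univ.filter fun i : Fin n => (i : ℕ) < x) := by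
    ext i
    simp only [mem_filter, mem_univ, true_and, mem_insert, Fin.ext_iff]
    omega
  rw [PartSum, this, sum_insert (by simp)]
  rfl

lemma eq_of_partSum_eq {A B : Matrix (Fin n) (Fin m) ℝ}
    (h : ∀ k w, PartSum A k w = PartSum B k w) : A = B := by
  ext x w
  linarith [partSum_succ A x w, partSum_succ B x w, h (x + 1) w, h x w]

lemma partSum_sum {J : ℕ} (Q : Fin J → Matrix (Fin n) (Fin m) ℝ) (k : ℕ) (w : Fin m) :
    PartSum (∑ j, Q j) k w = ∑ j, PartSum (Q j) k w := by
  simp only [PartSum, Matrix.sum_apply]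
  exact sum_comm

lemma partSum_mul (P : Matrix (Fin n) (Fin ℓ) ℝ) (S : Matrix (Fin ℓ) (Fin m) ℝ)
    (k : ℕ) (w : Fin m) : PartSum (P * S) k w = ∑ y, PartSum P k y * S y w := by
  simp only [PartSum, Matrix.mul_apply, sum_mul]
  exact sum_comm

lemma sum_partSum_mul (P : Matrix (Fin n) (Fin ℓ) ℝ) {S : Matrix (Fin ℓ) (Fin m) ℝ}
    (hS : RowStoch S) (k : ℕ) : ∑ w, PartSum (P * S) k w = ∑ y, PartSum P k y := by
  simp only [partSum_mul]
  rw [sum_comm]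
  simp [← mul_sum, hS.2]

lemma partSum_mul_le {D : Matrix (Fin n) (Fin n) ℝ} (hD : DStoch D)
    {P : Matrix (Fin n) (Fin ℓ) ℝ} (hP0 : ∀ x y, 0 ≤ P x y) (hPs : ∀ y, Antitone fun x => P x y)
    (k : ℕ) (y : Fin ℓ) : PartSum (D * P) k y ≤ PartSum P k y := by
  set A := univ.filter fun x : Fin n => (x : ℕ) < k
  have hcol : ∀ x', ∑ x ∈ A, D x x' ≤ 1 := fun x' =>
    (hD.2.2 x') ▸ sum_le_sum_of_subset_of_nonneg (subset_univ A) fun x _ _ => hD.1 x x'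
  have hmass : ∑ x', ∑ x ∈ A, D x x' = #A := by
    rw [sum_comm]
    simp [hD.2.1]
  have hswap : PartSum (D * P) k y = ∑ x', (∑ x ∈ A, D x x') * P x' y := by
    simp only [PartSum, Matrix.mul_apply, sum_mul]
    exact sum_comm
  rw [hswap]
  -- pivot: the first entry past the window; when the window is everything, `0` bounds below
  refine sum_mul_le_sum_of_threshold A (if h : k < n then P ⟨k, h⟩ y else 0)
    (fun x' => sum_nonneg fun x _ => hD.1 x x') hcol hmass (fun x hx => ?_) (fun x hx => ?_)
  · have hx : (x : ℕ) < k := (mem_filter.mp hx).2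
    split_ifs with h
    · exact hPs y hx.le
    · exact hP0 x y
  · have hx : k ≤ (x : ℕ) := by simpa [A] using hx
    rw [dif_pos (hx.trans_lt x.isLt)]
    exact hPs y hx

lemma CondMaj.exists_partSum_le {P : Matrix (Fin n) (Fin ℓ) ℝ}
    {Q : Matrix (Fin n) (Fin m) ℝ} (hP0 : ∀ x y, 0 ≤ P x y)
    (hPs : ∀ y, Antitone fun x => P x y) (h : CondMaj P Q) :
    ∃ S, RowStoch S ∧ ∀ k w, PartSum Q k w ≤ PartSum (P * S) k w := by
  obtain ⟨J, D, R, hD, hR, hS, rfl⟩ := h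
  refine ⟨∑ j, R j, hS, fun k w => ?_⟩
  calc PartSum (∑ j, D j * P * R j) k w = ∑ j, ∑ y, PartSum (D j * P) k y * R j y w := by
        simp only [partSum_sum, partSum_mul]
    _ ≤ ∑ j, ∑ y, PartSum P k y * R j y w := by
        gcongr with j _ y
        · exact hR j y w
        · exact partSum_mul_le (hD j) hP0 hPs k y
    _ = PartSum (P * ∑ j, R j) k w := by
        simp only [partSum_mul, Matrix.sum_apply, mul_sum]
        exact sum_comm

lemma eq_mul_of_condMaj_of_condMaj {P : Matrix (Fin n) (Fin ℓ) ℝ}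
    {Q : Matrix (Fin n) (Fin m) ℝ} (hP0 : ∀ x y, 0 ≤ P x y) (hQ0 : ∀ x w, 0 ≤ Q x w)
    (hPs : ∀ y, Antitone fun x => P x y) (hQs : ∀ w, Antitone fun x => Q x w)
    (h1 : CondMaj P Q) (h2 : CondMaj Q P) :
    ∃ S S', RowStoch S ∧ RowStoch S' ∧ Q = P * S ∧ P = Q * S' := by
  obtain ⟨S, hS, hQP⟩ := h1.exists_partSum_le hP0 hPs
  obtain ⟨S', hS', hPQ⟩ := h2.exists_partSum_le hQ0 hQs
  have htotal : ∀ k, ∑ w, PartSum Q k w = ∑ y, PartSum P k y := fun k =>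
    le_antisymm ((sum_le_sum fun w _ => hQP k w).trans (sum_partSum_mul P hS k).le)
      ((sum_le_sum fun y _ => hPQ k y).trans (sum_partSum_mul Q hS' k).le)
  refine ⟨S, S', hS, hS', eq_of_partSum_eq fun k w => ?_, eq_of_partSum_eq fun k y => ?_⟩
  · have hsum : ∑ w, PartSum Q k w = ∑ w, PartSum (P * S) k w := by
      rw [htotal, sum_partSum_mul P hS]
    exact (sum_eq_sum_iff_of_le fun w _ => hQP k w).mp hsum w (mem_univ w)
  · have hsum : ∑ y, PartSum P k y = ∑ y, PartSum (Q * S') k y := by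
      rw [← htotal, sum_partSum_mul Q hS']
    exact (sum_eq_sum_iff_of_le fun y _ => hPQ k y).mp hsum y (mem_univ y)

end PartSum

section StdForm

variable {n ℓ m : ℕ}

lemma StdForm.colSum_pos {P : Matrix (Fin n) (Fin ℓ) ℝ} (hP0 : ∀ x y, 0 ≤ P x y)
    (hP : StdForm P) (y : Fin ℓ) : 0 < ColSum P y := by
  obtain ⟨x, hx⟩ := hP.2.1 y
  exact (lt_of_le_of_ne (hP0 x y) (Ne.symm hx)).trans_le
    (single_le_sum (fun x _ => hP0 x y) (mem_univ x))

lemma StdForm.injective_transpose {P : Matrix (Fin n) (Fin ℓ) ℝ} (hP : StdForm P) :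
    Function.Injective Pᵀ := fun y y' h => by_contra fun hne =>
  hP.2.2.1 y y' hne 1 zero_le_one fun x => by simpa using congrFun h x

lemma StdForm.injective_inv_colSum_smul {P : Matrix (Fin n) (Fin ℓ) ℝ}
    (hP0 : ∀ x y, 0 ≤ P x y) (hP : StdForm P) :
    Function.Injective fun y => (ColSum P y)⁻¹ • Pᵀ y := by
  intro y y' h
  by_contra hne
  have hy := hP.colSum_pos hP0 y
  have hy' := hP.colSum_pos hP0 y'
  refine hP.2.2.1 y y' hne (ColSum P y / ColSum P y') (by positivity) fun x => ?_
  have hx := congrFun h x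
  simp only [Pi.smul_apply, transpose_apply, smul_eq_mul] at hx
  field_simp at hx ⊢
  linarith

noncomputable def colKey (Q : Matrix (Fin n) (Fin m) ℝ) (w : Fin m) : ℝ ×ₗ Lex (ℕ → ℝ) :=
  toLex (ColSum Q w, toLex fun k => PartSum Q k w)

lemma StdForm.strictAnti_colKey {Q : Matrix (Fin n) (Fin m) ℝ} (hQ : StdForm Q) :
    StrictAnti (colKey Q) := by
  intro w w' hww'
  refine Prod.Lex.toLex_lt_toLex.mpr ?_
  rcases hQ.2.2.2 w w' hww' with h | ⟨h, k, hk, hlt⟩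
  · exact Or.inl h
  · exact Or.inr ⟨h, k, fun j hj => (hk j hj).symm, hlt⟩

lemma colKey_eq_of_transpose_eq {P : Matrix (Fin n) (Fin ℓ) ℝ} {Q : Matrix (Fin n) (Fin m) ℝ}
    {y : Fin ℓ} {w : Fin m} (h : Pᵀ y = Qᵀ w) : colKey P y = colKey Q w := by
  have hcol : ∀ x, P x y = Q x w := fun x => congrFun h x
  simp only [colKey, ColSum, PartSum, hcol]

lemma StdForm.eq_of_transpose_eq {P : Matrix (Fin n) (Fin ℓ) ℝ} {Q : Matrix (Fin n) (Fin m) ℝ}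
    (hP : StdForm P) (hQ : StdForm Q) (hPQ : ∀ y, ∃ w, Pᵀ y = Qᵀ w)
    (hQP : ∀ w, ∃ y, Qᵀ w = Pᵀ y) : ℓ = m ∧ HEq P Q := by
  choose g hg using hPQ
  have hmono : StrictMono g := fun y y' hyy' => by
    have := hP.strictAnti_colKey hyy'
    rwa [colKey_eq_of_transpose_eq (hg y), colKey_eq_of_transpose_eq (hg y'),
      hQ.strictAnti_colKey.lt_iff_gt] at this
  have hsurj : Function.Surjective g := fun w => by
    obtain ⟨y, hy⟩ := hQP w
    exact ⟨y, hQ.injective_transpose ((hg y).symm.trans hy.symm)⟩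
  obtain rfl : ℓ = m := by simpa using Fintype.card_of_bijective ⟨hmono.injective, hsurj⟩
  refine ⟨rfl, heq_of_eq (Matrix.ext fun x y => ?_)⟩
  simpa [hmono.apply_eq] using congrFun (hg y) x

lemma isMixture_transpose_mul (P : Matrix (Fin n) (Fin ℓ) ℝ)
    {S : Matrix (Fin ℓ) (Fin m) ℝ} (hS : RowStoch S) : IsMixture S univ univ Pᵀ (P * S)ᵀ :=
  ⟨fun y _ => hS.2 y, fun w _ => by ext x; simp [Matrix.mul_apply, mul_comm]⟩

lemma StdForm.injective_div {P : Matrix (Fin n) (Fin ℓ) ℝ} (hP0 : ∀ x y, 0 ≤ P x y)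
    (hP : StdForm P) {φ ψ : Module.Dual ℝ (Fin n → ℝ)} (hφ : ∀ y, φ (Pᵀ y) = ColSum P y)
    (hψ : Set.InjOn ψ (Set.range fun y => (ColSum P y)⁻¹ • Pᵀ y)) :
    Function.Injective fun y => ψ (Pᵀ y) / φ (Pᵀ y) := fun y y' h =>
  hP.injective_inv_colSum_smul hP0 <| hψ (Set.mem_range_self y) (Set.mem_range_self y') <| by
    simpa [hφ, div_eq_inv_mul] using h

lemma StdForm.exists_transpose_eq_of_eq_mul {P : Matrix (Fin n) (Fin ℓ) ℝ}
    {Q : Matrix (Fin n) (Fin m) ℝ} {S : Matrix (Fin ℓ) (Fin m) ℝ} {S' : Matrix (Fin m) (Fin ℓ) ℝ}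
    (hP0 : ∀ x y, 0 ≤ P x y) (hQ0 : ∀ x w, 0 ≤ Q x w) (hP : StdForm P) (hQ : StdForm Q)
    (hS : RowStoch S) (hS' : RowStoch S') (hQP : Q = P * S) (hPQ : P = Q * S') :
    ∀ w, ∃ y, Qᵀ w = Pᵀ y := by
  let φ : Module.Dual ℝ (Fin n → ℝ) := ∑ x, LinearMap.proj x
  have hφ : ∀ {k} (A : Matrix (Fin n) (Fin k) ℝ) y, φ (Aᵀ y) = ColSum A y := fun A y => by
    simp [φ, ColSum]
  obtain ⟨ψ, hψ⟩ := Module.exists_dual_injOn ℝ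
    ((Set.finite_range fun y => (ColSum P y)⁻¹ • Pᵀ y).union
      (Set.finite_range fun w => (ColSum Q w)⁻¹ • Qᵀ w))
  have hexists := (hQP ▸ isMixture_transpose_mul P hS).exists_eq φ ψ
    (hPQ ▸ isMixture_transpose_mul Q hS') hS.1 hS'.1
    (fun y => hφ P y ▸ hP.colSum_pos hP0 y) (fun w => hφ Q w ▸ hQ.colSum_pos hQ0 w)
    (hP.injective_div hP0 (hφ P) (hψ.mono Set.subset_union_left))
    (hQ.injective_div hQ0 (hφ Q) (hψ.mono Set.subset_union_right))
  exact fun w => (hexists w (mem_univ w)).imp fun y hy => hy.2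

end StdForm

theorem stmt5 {n ℓ m : ℕ} (P : Matrix (Fin n) (Fin ℓ) ℝ) (Q : Matrix (Fin n) (Fin m) ℝ)
    (hP : JointProb P) (hQ : JointProb Q)
    (hPstd : StdForm P) (hQstd : StdForm Q)
    (h1 : CondMaj P Q) (h2 : CondMaj Q P) :
    ℓ = m ∧ HEq P Q := by
  obtain ⟨S, S', hS, hS', hQP, hPQ⟩ :=
    eq_mul_of_condMaj_of_condMaj hP.1 hQ.1 hPstd.1 hQstd.1 h1 h2
  exact hPstd.eq_of_transpose_eq hQstd
    (hQstd.exists_transpose_eq_of_eq_mul hQ.1 hP.1 hPstd hS' hS hPQ hQP)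
    (hPstd.exists_transpose_eq_of_eq_mul hP.1 hQ.1 hQstd hS hS' hQP hPQ)
end

section
/- Let P be an n×ℓ and Q an n×m joint probability matrix. If Q ≺_c P, then for every convex symmetric function Φ : ℝⁿ → ℝ, Σ_{y=1}^ℓ p_y Φ(p^{|y}) ≥ Σ_{w=1}^m q_w Φ(q^{|w}), where p_y = Σ_x p_{xy} is the marginal, p^{|y} is the conditional distribution (x ↦ p_{xy}/p_y), and similarly for Q. -/
open Matrix Finset

/-! The left-hand side is `∑_y φ(p_y)` for the perspective `φ(v) = (∑ v) Φ(v / ∑ v)`, taken over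
the columns `p_y` of `P`; `φ` is positively homogeneous and satisfies Jensen's inequality for
arbitrary nonnegative weights on nonnegative vectors. The `w`-th column of `Q` is
`∑_{j,y} R⁽ʲ⁾_{yw} D⁽ʲ⁾ p_y`, so `φ(q_w) ≤ ∑_{j,y} R⁽ʲ⁾_{yw} φ(D⁽ʲ⁾ p_y)`. A doubly stochastic
`D` preserves the mass of a vector and, being a convex combination of permutation matrices
(Birkhoff), does not increase a convex symmetric `Φ`; hence `φ(D p) ≤ φ(p)`. Summing over `w`
and using `∑_{j,w} R⁽ʲ⁾_{yw} = 1` gives the claim. -/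

section

variable {ι : Type*} [Fintype ι]

/-- The perspective `(v, t) ↦ t Φ(v / t)` of `Φ`, taken at the total mass `t = ∑ v`. At `v = 0`
the junk value `v / 0 = 0` is harmless, since the prefactor vanishes. -/
noncomputable def perspective (Φ : (ι → ℝ) → ℝ) (v : ι → ℝ) : ℝ :=
  (∑ i, v i) * Φ (fun i => v i / ∑ j, v j)

theorem ConvexOn.map_mulVec_le_of_mem_doublyStochastic [DecidableEq ι] {Φ : (ι → ℝ) → ℝ}
    (hconv : ConvexOn ℝ Set.univ Φ) (hsym : ∀ (σ : Equiv.Perm ι) (v : ι → ℝ), Φ (v ∘ σ) = Φ v)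
    {D : Matrix ι ι ℝ} (hD : D ∈ doublyStochastic ℝ ι) (v : ι → ℝ) :
    Φ (D *ᵥ v) ≤ Φ v := by
  obtain ⟨c, hc0, hc1, rfl⟩ := exists_eq_sum_perm_of_mem_doublyStochastic hD
  calc Φ ((∑ σ, c σ • σ.permMatrix ℝ) *ᵥ v) = Φ (∑ σ, c σ • (v ∘ σ)) := by
        simp only [sum_mulVec, smul_mulVec, permMatrix_mulVec]
    _ ≤ ∑ σ, c σ * Φ (v ∘ σ) := hconv.map_sum_le (fun σ _ => hc0 σ) hc1 (fun _ _ => trivial)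
    _ = Φ v := by simp only [hsym, ← sum_mul, hc1, one_mul]

theorem perspective_mulVec_le [DecidableEq ι] {Φ : (ι → ℝ) → ℝ}
    (hconv : ConvexOn ℝ Set.univ Φ) (hsym : ∀ (σ : Equiv.Perm ι) (v : ι → ℝ), Φ (v ∘ σ) = Φ v)
    {D : Matrix ι ι ℝ} (hD : D ∈ doublyStochastic ℝ ι) {v : ι → ℝ} (hv : 0 ≤ v) :
    perspective Φ (D *ᵥ v) ≤ perspective Φ v := by
  have hnorm : (fun i => (D *ᵥ v) i / ∑ j, v j) = D *ᵥ fun i => v i / ∑ j, v j := by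
    simp only [div_eq_inv_mul, ← smul_eq_mul, ← Pi.smul_def, mulVec_smul]
  unfold perspective
  rw [sum_mulVec_of_mem_doublyStochastic hD, hnorm]
  exact mul_le_mul_of_nonneg_left (hconv.map_mulVec_le_of_mem_doublyStochastic hsym hD _)
    (Fintype.sum_nonneg hv)

theorem smul_div_sum_self {𝕜 : Type*} [Field 𝕜] [LinearOrder 𝕜] [IsStrictOrderedRing 𝕜]
    {v : ι → 𝕜} (hv : 0 ≤ v) :
    (∑ j, v j) • (fun i => v i / ∑ j, v j) = v := by
  ext i
  rcases (Fintype.sum_nonneg hv).eq_or_lt' with hs | hs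
  · simp [hs, (sum_eq_zero_iff_of_nonneg fun j _ => hv j).1 hs i]
  · simp [mul_div_cancel₀ _ hs.ne']

theorem perspective_sum_smul_le {κ : Type*} {Φ : (ι → ℝ) → ℝ} (hconv : ConvexOn ℝ Set.univ Φ)
    (s : Finset κ) {c : κ → ℝ} {v : κ → ι → ℝ} (hc : ∀ k ∈ s, 0 ≤ c k)
    (hv : ∀ k ∈ s, 0 ≤ v k) :
    perspective Φ (∑ k ∈ s, c k • v k) ≤ ∑ k ∈ s, c k * perspective Φ (v k) := by
  set m : κ → ℝ := fun k => ∑ i, v k i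
  set u : κ → ι → ℝ := fun k i => v k i / m k
  have hcm : ∀ k ∈ s, 0 ≤ c k * m k := fun k hk =>
    mul_nonneg (hc k hk) (Fintype.sum_nonneg (hv k hk))
  have hsum : ∑ k ∈ s, c k • v k = ∑ k ∈ s, (c k * m k) • u k :=
    sum_congr rfl fun k hk => by rw [mul_smul, smul_div_sum_self (hv k hk)]
  set M := ∑ k ∈ s, c k * m k
  have hM : ∑ i, (∑ k ∈ s, c k • v k) i = M := by
    simp only [Finset.sum_apply, Pi.smul_apply, smul_eq_mul, m, M, mul_sum]
    exact sum_comm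
  have hRHS : ∑ k ∈ s, c k * perspective Φ (v k) = ∑ k ∈ s, c k * m k * Φ (u k) :=
    sum_congr rfl fun k _ => (mul_assoc _ _ _).symm
  rw [hRHS]
  unfold perspective
  rw [hM]
  obtain hM0 | hM0 : M = 0 ∨ 0 < M := (sum_nonneg hcm).eq_or_lt'
  · rw [hM0, zero_mul]
    refine (sum_eq_zero fun k hk => ?_).ge
    rw [(sum_eq_zero_iff_of_nonneg hcm).1 hM0 k hk, zero_mul]
  · have hnorm : (fun i => (∑ k ∈ s, c k • v k) i / M) = ∑ k ∈ s, (c k * m k / M) • u k := by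
      rw [hsum]
      ext i
      simp only [Finset.sum_apply, Pi.smul_apply, smul_eq_mul, sum_div]
      exact sum_congr rfl fun k _ => by ring
    have hjensen : Φ (∑ k ∈ s, (c k * m k / M) • u k) ≤ ∑ k ∈ s, (c k * m k / M) * Φ (u k) :=
      hconv.map_sum_le (fun k hk => div_nonneg (hcm k hk) hM0.le)
        (by rw [← sum_div, div_self hM0.ne']) (fun _ _ => trivial)
    calc M * Φ (fun i => (∑ k ∈ s, c k • v k) i / M)
        ≤ M * ∑ k ∈ s, (c k * m k / M) * Φ (u k) := by
          rw [hnorm]; exact mul_le_mul_of_nonneg_left hjensen hM0.le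
      _ = ∑ k ∈ s, c k * m k * Φ (u k) := by
          rw [mul_sum]; exact sum_congr rfl fun k _ => by field_simp [hM0.ne']

end

theorem col_sum_mul_mul_eq_sum_smul_mulVec {ι α β κ R : Type*} [Fintype ι] [Fintype α]
    [Fintype κ] [CommSemiring R] (D : κ → Matrix ι ι R) (P : Matrix ι α R) (T : κ → Matrix α β R)
    (w : β) :
    (fun x => (∑ j, D j * P * T j) x w) =
      ∑ z : κ × α, T z.1 z.2 w • (D z.1 *ᵥ fun x => P x z.2) := by
  ext x
  simp only [Matrix.sum_apply, Matrix.mul_apply, Finset.sum_apply, Pi.smul_apply, smul_eq_mul,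
    mulVec, dotProduct, Fintype.sum_prod_type, sum_mul, mul_sum]
  exact sum_congr rfl fun j _ => sum_congr rfl fun y _ => sum_congr rfl fun i _ => by ring

theorem stmt6_general {n ℓ m : ℕ} (P : Matrix (Fin n) (Fin ℓ) ℝ) (Q : Matrix (Fin n) (Fin m) ℝ)
    (hP : JointProb P) (h : CondMaj P Q)
    (Φ : (Fin n → ℝ) → ℝ) (hconv : ConvexOn ℝ Set.univ Φ)
    (hsym : ∀ (σ : Equiv.Perm (Fin n)) (v : Fin n → ℝ), Φ (v ∘ σ) = Φ v) :
    ∑ w, ColSum Q w * Φ (fun x => Q x w / ColSum Q w) ≤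
      ∑ y, ColSum P y * Φ (fun x => P x y / ColSum P y) := by
  obtain ⟨J, D, R, hD, hR, hRrow, rfl⟩ := h
  have hDmem : ∀ j, D j ∈ doublyStochastic ℝ (Fin n) := fun j =>
    mem_doublyStochastic_iff_sum.2 (hD j)
  have hPcol : ∀ y, 0 ≤ fun x => P x y := fun y x => hP.1 x y
  have hRmass : ∀ y, ∑ w, ∑ j, R j y w = 1 := fun y => by
    simpa only [Matrix.sum_apply] using hRrow.2 y
  calc ∑ w, perspective Φ (fun x => (∑ j, D j * P * R j) x w)
      ≤ ∑ w, ∑ z : Fin J × Fin ℓ, R z.1 z.2 w * perspective Φ (D z.1 *ᵥ fun x => P x z.2) := by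
        gcongr with w
        rw [col_sum_mul_mul_eq_sum_smul_mulVec]
        exact perspective_sum_smul_le hconv _ (fun z _ => hR _ _ _)
          fun z _ x => Fintype.sum_nonneg fun i => mul_nonneg ((hD z.1).1 x i) (hP.1 i z.2)
    _ ≤ ∑ w, ∑ z : Fin J × Fin ℓ, R z.1 z.2 w * perspective Φ (fun x => P x z.2) := by
        gcongr with w z
        · exact hR _ _ _
        · exact perspective_mulVec_le hconv hsym (hDmem z.1) (hPcol z.2)
    _ = ∑ y, (∑ w, ∑ j, R j y w) * perspective Φ (fun x => P x y) := by
        simp only [Fintype.sum_prod_type, sum_mul]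
        exact (sum_congr rfl fun _ _ => sum_comm).trans sum_comm
    _ = ∑ y, perspective Φ (fun x => P x y) := by simp only [hRmass, one_mul]

theorem stmt6 {n ℓ m : ℕ} (P : Matrix (Fin n) (Fin ℓ) ℝ) (Q : Matrix (Fin n) (Fin m) ℝ)
    (hP : JointProb P) (hQ : JointProb Q) (h : CondMaj P Q)
    (Φ : (Fin n → ℝ) → ℝ) (hconv : ConvexOn ℝ Set.univ Φ)
    (hsym : ∀ (σ : Equiv.Perm (Fin n)) (v : Fin n → ℝ), Φ (v ∘ σ) = Φ v) :
    ∑ w, ColSum Q w * Φ (fun x => Q x w / ColSum Q w) ≤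
      ∑ y, ColSum P y * Φ (fun x => P x y / ColSum P y) :=
  stmt6_general P Q hP h Φ hconv hsym
end
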